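/- Let X̂ ∈ SE(3), U ∈ se(3), let y₁,…,y_N ∈ ℝ⁴ be unit vectors, ẙ₁,…,ẙ_N ∈ ℝ⁴ unit vectors, and k₁,…,k_N > 0. Define f : ℝ → ℝ by f(t) := Σᵢ₌₁^N (kᵢ/2) · |(I₄ + tU)X̂yᵢ / |(I₄ + tU)X̂yᵢ| − ẙᵢ|². Then f is differentiable at t = 0 with f′(0) = ⟨Δ(X̂, Y), U⟩ = tr(Δ(X̂, Y)ᵀ U), i.e. the right-trivialized derivative of the cost C(X̂, Y) := Σᵢ (kᵢ/2)|X̂yᵢ/|X̂yᵢ| − ẙᵢ|² in the direction UX̂ equals ⟨−P(Σᵢ kᵢ(I₄ − eᵢeᵢᵀ)ẙᵢeᵢᵀ), U⟩ where eᵢ := X̂yᵢ/|X̂yᵢ|. -/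

import Mathlib

open Matrix BigOperators

noncomputable section

/-- The Euclidean norm of a vector in `ℝⁿ`. -/
def enorm₂ {n : ℕ} (x : Fin n → ℝ) : ℝ := Real.sqrt (∑ i, x i ^ 2)

/-- Normalization of a vector: `x / |x|`. -/
def nrm {n : ℕ} (x : Fin n → ℝ) : Fin n → ℝ := (enorm₂ x)⁻¹ • x

/-- `R ∈ SO(3)`: rotation matrices. -/
def SO3 (R : Matrix (Fin 3) (Fin 3) ℝ) : Prop := Rᵀ * R = 1 ∧ R.det = 1

/-- The 4×4 block matrix `[[M, m],[0ᵀ, 0]]`. -/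
def blk (M : Matrix (Fin 3) (Fin 3) ℝ) (m : Fin 3 → ℝ) : Matrix (Fin 4) (Fin 4) ℝ :=
  fun i j =>
    if h : (i : ℕ) < 3 then
      if h' : (j : ℕ) < 3 then M ⟨i, h⟩ ⟨j, h'⟩ else m ⟨i, h⟩
    else 0

/-- The 4×4 block matrix `[[R, p],[0ᵀ, 1]]`. -/
def toSE3 (R : Matrix (Fin 3) (Fin 3) ℝ) (p : Fin 3 → ℝ) : Matrix (Fin 4) (Fin 4) ℝ :=
  fun i j =>
    if h : (i : ℕ) < 3 then
      if h' : (j : ℕ) < 3 then R ⟨i, h⟩ ⟨j, h'⟩ else p ⟨i, h⟩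
    else if (j : ℕ) < 3 then 0 else 1

/-- The Special Euclidean group SE(3), as a subset of `ℝ^{4×4}`. -/
def SE3 : Set (Matrix (Fin 4) (Fin 4) ℝ) := {X | ∃ R p, SO3 R ∧ X = toSE3 R p}

/-- The skew-symmetric matrix `ω_×` associated with the cross product by `ω`. -/
def crossMat (ω : Fin 3 → ℝ) : Matrix (Fin 3) (Fin 3) ℝ :=
  !![0, -ω 2, ω 1; ω 2, 0, -ω 0; -ω 1, ω 0, 0]

/-- The cross product on `ℝ³`. -/
def cross3 (u v : Fin 3 → ℝ) : Fin 3 → ℝ :=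
  ![u 1 * v 2 - u 2 * v 1, u 2 * v 0 - u 0 * v 2, u 0 * v 1 - u 1 * v 0]

/-- The Lie algebra se(3), as a subset of `ℝ^{4×4}`. -/
def se3 : Set (Matrix (Fin 4) (Fin 4) ℝ) := {A | ∃ ω V, A = blk (crossMat ω) V}

/-- The projection `P : ℝ^{4×4} → se(3)`:
`P([[M₁, m₂],[m₃ᵀ, m₄]]) = [[(M₁ − M₁ᵀ)/2, m₂],[0ᵀ, 0]]`. -/
def projP (M : Matrix (Fin 4) (Fin 4) ℝ) : Matrix (Fin 4) (Fin 4) ℝ :=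
  fun i j =>
    if (i : ℕ) < 3 then (if (j : ℕ) < 3 then (M i j - M j i) / 2 else M i j) else 0

/-- The trace (Frobenius) inner product `⟨M₁, M₂⟩ = tr(M₁ᵀ M₂)`. -/
def mip (M₁ M₂ : Matrix (Fin 4) (Fin 4) ℝ) : ℝ := (M₁ᵀ * M₂).trace

/-- First three components of a vector in `ℝ⁴`. -/
def vbar (x : Fin 4 → ℝ) : Fin 3 → ℝ := fun i => x (Fin.castSucc i)

/-- The vector `[v; c] ∈ ℝ⁴`. -/
def vec4 (v : Fin 3 → ℝ) (c : ℝ) : Fin 4 → ℝ := Fin.snoc v c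

/-- The innovation term `Δ(X̂, Y) = −P(Σᵢ kᵢ (I₄ − eᵢeᵢᵀ) ẙᵢ eᵢᵀ)` where
`eᵢ = X̂yᵢ/|X̂yᵢ|`. -/
def innov {N : ℕ} (k : Fin N → ℝ) (ystar y : Fin N → Fin 4 → ℝ)
    (Xh : Matrix (Fin 4) (Fin 4) ℝ) : Matrix (Fin 4) (Fin 4) ℝ :=
  -projP (∑ i, k i •
    ((1 - vecMulVec (nrm (Xh *ᵥ y i)) (nrm (Xh *ᵥ y i))) *
      vecMulVec (ystar i) (nrm (Xh *ᵥ y i))))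

/-! The curve `t ↦ nrm ((1 + tU) z)` leaves `e = nrm z` with velocity `(I - eeᵀ) U e`, so the
`i`-th summand contributes `kᵢ (eᵢ - ẙᵢ) ⬝ (I - eᵢeᵢᵀ) U eᵢ = -kᵢ ⟨(I - eᵢeᵢᵀ) ẙᵢ eᵢᵀ, U⟩`, the term
in `eᵢ` vanishing because `eᵢ` is a unit vector. `P` is the orthogonal projection onto `se(3)`,
so it does not change the pairing with `U ∈ se(3)`. Since `X̂` is invertible, `X̂ yᵢ ≠ 0` and the
`eᵢ` are well defined. -/

lemma enorm₂_eq_sqrt_dotProduct {n : ℕ} (x : Fin n → ℝ) : enorm₂ x = √(x ⬝ᵥ x) := by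
  simp only [enorm₂, dotProduct, sq]

lemma enorm₂_sq {n : ℕ} (x : Fin n → ℝ) : enorm₂ x ^ 2 = x ⬝ᵥ x := by
  rw [enorm₂_eq_sqrt_dotProduct]
  exact Real.sq_sqrt (Finset.sum_nonneg fun i _ => mul_self_nonneg (x i))

lemma enorm₂_eq_zero {n : ℕ} {x : Fin n → ℝ} : enorm₂ x = 0 ↔ x = 0 := by
  rw [← sq_eq_zero_iff, enorm₂_sq, dotProduct_self_eq_zero]

lemma enorm₂_pos {n : ℕ} {x : Fin n → ℝ} (hx : x ≠ 0) : 0 < enorm₂ x :=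
  (Real.sqrt_nonneg _).lt_of_ne' (enorm₂_eq_zero.not.2 hx)

lemma nrm_dotProduct_nrm {n : ℕ} {x : Fin n → ℝ} (hx : x ≠ 0) : nrm x ⬝ᵥ nrm x = 1 := by
  have := (enorm₂_pos hx).ne'
  rw [nrm, smul_dotProduct, dotProduct_smul, ← enorm₂_sq, smul_eq_mul, smul_eq_mul]
  field_simp

lemma smul_nrm {n : ℕ} {x : Fin n → ℝ} (hx : x ≠ 0) : enorm₂ x • nrm x = x := by
  rw [nrm, smul_smul, mul_inv_cancel₀ (enorm₂_pos hx).ne', one_smul]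

section Calculus

variable {n : ℕ} {f : ℝ → Fin n → ℝ} {f' : Fin n → ℝ} {t : ℝ}

lemma HasDerivAt.dotProduct_self (hf : HasDerivAt f f' t) :
    HasDerivAt (fun s => f s ⬝ᵥ f s) (2 * (f t ⬝ᵥ f')) t := by
  have hcoord := hasDerivAt_pi.1 hf
  refine (HasDerivAt.fun_sum fun i _ => (hcoord i).mul (hcoord i)).congr_deriv ?_
  simp only [dotProduct, Finset.mul_sum]
  exact Finset.sum_congr rfl fun i _ => by ring

lemma HasDerivAt.enorm₂_sq (hf : HasDerivAt f f' t) :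
    HasDerivAt (fun s => enorm₂ (f s) ^ 2) (2 * (f t ⬝ᵥ f')) t := by
  simpa only [_root_.enorm₂_sq] using hf.dotProduct_self

lemma HasDerivAt.enorm₂ (hf : HasDerivAt f f' t) (hft : f t ≠ 0) :
    HasDerivAt (fun s => _root_.enorm₂ (f s)) ((f t ⬝ᵥ f') / _root_.enorm₂ (f t)) t := by
  have hpos := enorm₂_pos hft
  simp only [enorm₂_eq_sqrt_dotProduct] at hpos ⊢
  refine (hf.dotProduct_self.sqrt (Real.sqrt_pos.1 hpos).ne').congr_deriv ?_
  field_simp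

lemma HasDerivAt.nrm (hf : HasDerivAt f f' t) (hft : f t ≠ 0) :
    HasDerivAt (fun s => nrm (f s))
      ((_root_.enorm₂ (f t))⁻¹ • (f' - (nrm (f t) ⬝ᵥ f') • nrm (f t))) t := by
  have hne := (enorm₂_pos hft).ne'
  refine ((hf.enorm₂ hft).inv hne).smul hf |>.congr_deriv ?_
  simp only [_root_.nrm, smul_dotProduct, smul_smul, smul_sub, smul_eq_mul]
  rw [sub_eq_add_neg, ← neg_smul]
  congr 2
  field_simp

end Calculus

lemma trace_transpose_vecMulVec_mul {m : Type*} [Fintype m] {R : Type*} [CommSemiring R]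
    (a b : m → R) (U : Matrix m m R) : ((vecMulVec a b)ᵀ * U).trace = a ⬝ᵥ (U *ᵥ b) := by
  rw [transpose_vecMulVec, vecMulVec_mul, trace_vecMulVec, dotProduct_comm, dotProduct_mulVec]

lemma one_sub_vecMulVec_mul_vecMulVec {m : Type*} [Fintype m] [DecidableEq m] {R : Type*}
    [CommRing R] (e w : m → R) :
    (1 - vecMulVec e e) * vecMulVec w e = vecMulVec (w - (e ⬝ᵥ w) • e) e := by
  rw [mul_vecMulVec, sub_mulVec, one_mulVec, vecMulVec_mulVec, op_smul_eq_smul]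

lemma sub_dotProduct_tangent_eq_neg_trace {m : Type*} [Fintype m] [DecidableEq m] {R : Type*}
    [CommRing R] {e : m → R} (he : e ⬝ᵥ e = 1) (w : m → R) (U : Matrix m m R) :
    (e - w) ⬝ᵥ (U *ᵥ e - (e ⬝ᵥ U *ᵥ e) • e)
      = -(((1 - vecMulVec e e) * vecMulVec w e)ᵀ * U).trace := by
  rw [one_sub_vecMulVec_mul_vecMulVec, trace_transpose_vecMulVec_mul]
  simp only [dotProduct_sub, sub_dotProduct, dotProduct_smul, smul_dotProduct, smul_eq_mul,
    dotProduct_comm w e, he]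
  ring

lemma hasDerivAt_one_add_smul_mulVec {n : ℕ} (U : Matrix (Fin n) (Fin n) ℝ) (z : Fin n → ℝ) :
    HasDerivAt (fun t : ℝ => (1 + t • U) *ᵥ z) (U *ᵥ z) 0 := by
  have hline : (fun t : ℝ => (1 + t • U) *ᵥ z) = fun t => z + t • U *ᵥ z := by
    funext t
    rw [add_mulVec, one_mulVec, smul_mulVec]
  rw [hline]
  exact (((hasDerivAt_id (0 : ℝ)).smul_const (U *ᵥ z)).const_add z).congr_deriv (one_smul _ _)

lemma hasDerivAt_half_sq_dist_nrm {n : ℕ} (k : ℝ) (U : Matrix (Fin n) (Fin n) ℝ)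
    {z : Fin n → ℝ} (hz : z ≠ 0) (w : Fin n → ℝ) :
    HasDerivAt (fun t : ℝ => k / 2 * enorm₂ (nrm ((1 + t • U) *ᵥ z) - w) ^ 2)
      (-k * (((1 - vecMulVec (nrm z) (nrm z)) * vecMulVec w (nrm z))ᵀ * U).trace) 0 := by
  have hz' : (1 + (0 : ℝ) • U) *ᵥ z = z := by simp
  have hderiv := (((hasDerivAt_one_add_smul_mulVec U z).nrm (hz'.symm ▸ hz)).sub_const w
    |>.enorm₂_sq).const_mul (k / 2)
  have hUz : U *ᵥ z = enorm₂ z • U *ᵥ nrm z := by rw [← mulVec_smul, smul_nrm hz]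
  have hvel : (enorm₂ z)⁻¹ • (U *ᵥ z - (nrm z ⬝ᵥ U *ᵥ z) • nrm z)
      = U *ᵥ nrm z - (nrm z ⬝ᵥ U *ᵥ nrm z) • nrm z := by
    rw [hUz, dotProduct_smul, smul_eq_mul, mul_smul, ← smul_sub,
      inv_smul_smul₀ (enorm₂_pos hz).ne']
  refine hderiv.congr_deriv ?_
  rw [hz', hvel, sub_dotProduct_tangent_eq_neg_trace (nrm_dotProduct_nrm hz)]
  ring

lemma trace_transpose_projP_mul (M U : Matrix (Fin 4) (Fin 4) ℝ) (hU : U ∈ se3) :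
    ((projP M)ᵀ * U).trace = (Mᵀ * U).trace := by
  obtain ⟨ω, V, rfl⟩ := hU
  simp only [trace, crossMat, Fin.isValue, diag_apply, mul_apply, transpose_apply, projP, blk,
    of_apply, cons_val', cons_val_fin_one, mul_dite, ite_mul, zero_mul, mul_zero,
    Fin.sum_univ_four, Fin.coe_ofNat_eq_mod, Nat.zero_mod, Nat.ofNat_pos, ↓reduceDIte, ↓reduceIte,
    Fin.zero_eta, cons_val_zero, Nat.one_mod, Nat.one_lt_ofNat, Fin.mk_one, cons_val_one,
    Nat.reduceMod, Nat.lt_add_one, Fin.reduceFinMk, cons_val, Nat.mod_succ, lt_self_iff_false,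
    add_zero, sub_self, zero_div, zero_add, mul_neg, add_left_inj]
  ring

lemma det_toSE3 (R : Matrix (Fin 3) (Fin 3) ℝ) (p : Fin 3 → ℝ) : (toSE3 R p).det = R.det := by
  simp [det_succ_row_zero, Fin.sum_univ_succ, toSE3, Fin.succAbove]

lemma SE3.det_eq_one {X : Matrix (Fin 4) (Fin 4) ℝ} (hX : X ∈ SE3) : X.det = 1 := by
  obtain ⟨R, p, hR, rfl⟩ := hX
  rw [det_toSE3, hR.2]

lemma SE3.mulVec_ne_zero {X : Matrix (Fin 4) (Fin 4) ℝ} (hX : X ∈ SE3) {v : Fin 4 → ℝ}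
    (hv : v ≠ 0) : X *ᵥ v ≠ 0 := fun hXv =>
  one_ne_zero <| (SE3.det_eq_one hX).symm.trans <| exists_mulVec_eq_zero_iff.1 ⟨v, hv, hXv⟩

theorem cost_right_trivialized_derivative_general {N : ℕ}
    (Xh : Matrix (Fin 4) (Fin 4) ℝ) (hXh : Xh ∈ SE3)
    (U : Matrix (Fin 4) (Fin 4) ℝ) (hU : U ∈ se3)
    (y ystar : Fin N → Fin 4 → ℝ)
    (hy : ∀ i, enorm₂ (y i) = 1)
    (k : Fin N → ℝ) :
    HasDerivAt
      (fun t : ℝ =>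
        ∑ i, (k i / 2) * (enorm₂ (nrm ((1 + t • U) *ᵥ (Xh *ᵥ y i)) - ystar i)) ^ 2)
      (((innov k ystar y Xh)ᵀ * U).trace) 0 := by
  have hXy : ∀ i, Xh *ᵥ y i ≠ 0 := fun i =>
    SE3.mulVec_ne_zero hXh fun h0 => one_ne_zero ((hy i).symm.trans (enorm₂_eq_zero.2 h0))
  refine (HasDerivAt.fun_sum fun i _ =>
    hasDerivAt_half_sq_dist_nrm (k i) U (hXy i) (ystar i)).congr_deriv ?_
  rw [innov, transpose_neg, neg_mul, trace_neg, trace_transpose_projP_mul _ _ hU]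
  simp only [transpose_sum, transpose_smul, Matrix.sum_mul, smul_mul, trace_sum, trace_smul,
    smul_eq_mul, neg_mul, Finset.sum_neg_distrib]

/-- the right-trivialized derivative of the cost
`C(X̂,Y) = Σᵢ (kᵢ/2)|X̂yᵢ/|X̂yᵢ| − ẙᵢ|²` in the direction `UX̂` equals
`⟨Δ(X̂,Y), U⟩ = tr(Δ(X̂,Y)ᵀ U)`. -/
theorem cost_right_trivialized_derivative {N : ℕ}
    (Xh : Matrix (Fin 4) (Fin 4) ℝ) (hXh : Xh ∈ SE3)
    (U : Matrix (Fin 4) (Fin 4) ℝ) (hU : U ∈ se3)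
    (y ystar : Fin N → Fin 4 → ℝ)
    (hy : ∀ i, enorm₂ (y i) = 1) (hystar : ∀ i, enorm₂ (ystar i) = 1)
    (k : Fin N → ℝ) (hk : ∀ i, 0 < k i) :
    HasDerivAt
      (fun t : ℝ =>
        ∑ i, (k i / 2) * (enorm₂ (nrm ((1 + t • U) *ᵥ (Xh *ᵥ y i)) - ystar i)) ^ 2)
      (((innov k ystar y Xh)ᵀ * U).trace) 0 :=
  cost_right_trivialized_derivative_general Xh hXh U hU y ystar hy k
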